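/- Under the setup where d is strict negative type on [N], J = peel(d), I = J \ {j₀}, with δ the distance column from I to j₀, Δ = d|_I^{-1} δ, w⁽⁰⁾ = d|_J^{-1} 1, and w₍J₎⁽⁰⁾ the coordinate of w⁽⁰⁾ at j₀: then peel(d|_I) = I if and only if w⁽⁰⁾|_I + w⁽⁰⁾_{j₀}·Δ > 0 componentwise. -/

import Mathlib

/-!
For a strict negative type matrix `e` (symmetric, zero diagonal, negative definite on
sum-zero vectors) the maximizers of `x ⬝ᵥ e *ᵥ x` on the simplex are read off from `e⁻¹ *ᵥ 1`.
A maximizer `q` with full support is a critical point, so `e *ᵥ q` is constant and `q` is a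
positive multiple of `e⁻¹ *ᵥ 1`. Conversely, if `e⁻¹ *ᵥ 1 > 0` its normalization `q'` lies in the
simplex with `e *ᵥ q'` constant, so `Q(q' + v) = Q(q') + Q(v) < Q(q')` for every nonzero sum-zero
`v`: it is the unique maximizer. Thus every maximizer has full support iff `e⁻¹ *ᵥ 1 > 0`.

Applied to `d|_I` it remains to compute `d|_I⁻¹ *ᵥ 1`: deleting the row of `j₀` from
`d|_J *ᵥ w⁰ = 1` gives `d|_I *ᵥ (w⁰|_I + w⁰_{j₀} Δ) = 1`. When `|I| = 1`, `d|_I = 0` is singular,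
but then both sides hold trivially since `w⁰ > 0`.
-/

open Matrix Filter Topology

section Generic

variable {ι R : Type*} [Fintype ι] [CommRing R]

theorem Matrix.IsSymm.dotProduct_mulVec_comm {e : Matrix ι ι R} (he : e.IsSymm) (x y : ι → R) :
    x ⬝ᵥ e *ᵥ y = y ⬝ᵥ e *ᵥ x := by
  simpa only [he.eq] using dotProduct_transpose_mulVec e x y

theorem Matrix.IsSymm.add_dotProduct_mulVec_add {e : Matrix ι ι R} (he : e.IsSymm) (x v : ι → R) :
    (x + v) ⬝ᵥ e *ᵥ (x + v) = x ⬝ᵥ e *ᵥ x + 2 * (v ⬝ᵥ e *ᵥ x) + v ⬝ᵥ e *ᵥ v := by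
  rw [mulVec_add, dotProduct_add, add_dotProduct, add_dotProduct, he.dotProduct_mulVec_comm x v]
  ring

variable [DecidableEq ι] {A : Matrix ι ι R}

theorem Matrix.nonsing_inv_mulVec_eq_of_mulVec_eq (hA : IsUnit A.det) {x v : ι → R}
    (h : A *ᵥ x = v) : A⁻¹ *ᵥ v = x := by
  rw [← h, mulVec_mulVec, nonsing_inv_mul A hA, one_mulVec]

theorem Matrix.mulVec_nonsing_inv_mulVec (hA : IsUnit A.det) (v : ι → R) :
    A *ᵥ (A⁻¹ *ᵥ v) = v := by
  rw [mulVec_mulVec, mul_nonsing_inv A hA, one_mulVec]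

end Generic

section Quadratic

variable {ι : Type*} [Fintype ι]

def IsStrictNegType (e : Matrix ι ι ℝ) : Prop :=
  ∀ x : ι → ℝ, x ≠ 0 → ∑ i, x i = 0 → x ⬝ᵥ e *ᵥ x < 0

theorem ne_zero_of_mem_stdSimplex_of_subsingleton [Subsingleton ι] {q : ι → ℝ}
    (hq : q ∈ stdSimplex ℝ ι) (i : ι) : q i ≠ 0 := by
  have : Nonempty ι := ⟨i⟩
  rw [stdSimplex_unique, Set.mem_singleton_iff] at hq
  simp [hq]

variable {e : Matrix ι ι ℝ}

theorem Matrix.IsSymm.dotProduct_mulVec_eq_zero_of_isMaxOn (he : e.IsSymm) {q : ι → ℝ}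
    (hq : q ∈ stdSimplex ℝ ι) (hmax : IsMaxOn (fun x => x ⬝ᵥ e *ᵥ x) (stdSimplex ℝ ι) q)
    (hpos : ∀ i, 0 < q i) {v : ι → ℝ} (hv : ∑ i, v i = 0) : v ⬝ᵥ e *ᵥ q = 0 := by
  have hmem : ∀ᶠ t in 𝓝 (0 : ℝ), q + t • v ∈ stdSimplex ℝ ι := by
    have hcoord : ∀ᶠ t in 𝓝 (0 : ℝ), ∀ i, 0 < q i + t * v i := eventually_all.2 fun i => by
      have : Tendsto (fun t : ℝ => q i + t * v i) (𝓝 0) (𝓝 (q i)) :=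
        (by fun_prop : Continuous fun t : ℝ => q i + t * v i).tendsto' 0 _ (by simp)
      exact this.eventually_const_lt (hpos i)
    filter_upwards [hcoord] with t ht
    exact ⟨fun i => (ht i).le, by simp [Finset.sum_add_distrib, ← Finset.mul_sum, hq.2, hv]⟩
  have hloc : IsLocalMax (fun t : ℝ => (q + t • v) ⬝ᵥ e *ᵥ (q + t • v)) 0 :=
    hmem.mono fun t ht => by simpa using isMaxOn_iff.1 hmax _ ht
  have hexpand : (fun t : ℝ => (q + t • v) ⬝ᵥ e *ᵥ (q + t • v)) =
      fun t => q ⬝ᵥ e *ᵥ q + t * (2 * (v ⬝ᵥ e *ᵥ q)) + t ^ 2 * (v ⬝ᵥ e *ᵥ v) := by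
    funext t
    rw [he.add_dotProduct_mulVec_add]
    simp only [mulVec_smul, dotProduct_smul, smul_dotProduct, smul_eq_mul]
    ring
  have hderiv : HasDerivAt (fun t : ℝ => (q + t • v) ⬝ᵥ e *ᵥ (q + t • v))
      (2 * (v ⬝ᵥ e *ᵥ q)) 0 := by
    rw [hexpand]
    simpa using (((hasDerivAt_id (0 : ℝ)).mul_const (2 * (v ⬝ᵥ e *ᵥ q))).const_add
      (q ⬝ᵥ e *ᵥ q)).fun_add ((hasDerivAt_pow 2 (0 : ℝ)).mul_const (v ⬝ᵥ e *ᵥ v))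
  linarith [hloc.hasDerivAt_eq_zero hderiv]

variable [DecidableEq ι]

theorem Matrix.IsSymm.mulVec_eq_smul_one_of_isMaxOn (he : e.IsSymm) {q : ι → ℝ}
    (hq : q ∈ stdSimplex ℝ ι) (hmax : IsMaxOn (fun x => x ⬝ᵥ e *ᵥ x) (stdSimplex ℝ ι) q)
    (hpos : ∀ i, 0 < q i) : e *ᵥ q = (q ⬝ᵥ e *ᵥ q) • 1 := by
  have hconst (i j : ι) : (e *ᵥ q) j = (e *ᵥ q) i := by
    have := he.dotProduct_mulVec_eq_zero_of_isMaxOn hq hmax hpos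
      (v := Pi.single j 1 - Pi.single i 1) (by simp [Finset.sum_sub_distrib])
    simpa [sub_dotProduct, sub_eq_zero] using this
  funext i
  rw [Pi.smul_apply, Pi.one_apply, smul_eq_mul, mul_one]
  calc (e *ᵥ q) i = ∑ k, q k * (e *ᵥ q) i := by rw [← Finset.sum_mul, hq.2, one_mul]
    _ = q ⬝ᵥ e *ᵥ q := Finset.sum_congr rfl fun k _ => by rw [hconst i k]

theorem inv_mulVec_one_pos_of_isMaxOn (he : e.IsSymm) (hdiag : ∀ i, e i i = 0)
    (hdet : IsUnit e.det) {q : ι → ℝ} (hq : q ∈ stdSimplex ℝ ι)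
    (hmax : IsMaxOn (fun x => x ⬝ᵥ e *ᵥ x) (stdSimplex ℝ ι) q) (hpos : ∀ i, 0 < q i) (i : ι) :
    0 < (e⁻¹ *ᵥ 1) i := by
  set c := q ⬝ᵥ e *ᵥ q
  have hc_nonneg : 0 ≤ c := by
    simpa [hdiag] using isMaxOn_iff.1 hmax _ (single_mem_stdSimplex ℝ i)
  have heq : e *ᵥ q = c • 1 := he.mulVec_eq_smul_one_of_isMaxOn hq hmax hpos
  have hc : c ≠ 0 := by
    intro hc
    have hq0 : q = 0 := by
      rw [← nonsing_inv_mulVec_eq_of_mulVec_eq hdet heq, hc, zero_smul, mulVec_zero]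
    simpa [hq0] using hq.2
  have hinv : e⁻¹ *ᵥ 1 = c⁻¹ • q := nonsing_inv_mulVec_eq_of_mulVec_eq hdet <| by
    rw [mulVec_smul, heq, smul_smul, inv_mul_cancel₀ hc, one_smul]
  rw [hinv]
  exact mul_pos (inv_pos.2 (hc_nonneg.lt_of_ne' hc)) (hpos i)

namespace IsStrictNegType

theorem isUnit_det (h : IsStrictNegType e) (he : e.IsSymm) (hdiag : ∀ i, e i i = 0)
    {a b : ι} (hab : e a b ≠ 0) : IsUnit e.det := by
  rw [isUnit_iff_ne_zero]
  intro hdet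
  obtain ⟨v, hv0, hev⟩ := exists_mulVec_eq_zero_iff.2 hdet
  set c := ∑ i, v i
  -- `y` has zero sum and `y ⬝ᵥ e *ᵥ y = c ^ 2 * e b b = 0`, so `v = c • Pi.single b 1`;
  -- but `e` does not kill that vector, as `e a b ≠ 0` and `c ≠ 0`.
  set y := v - c • Pi.single b 1
  have hy : y = 0 := by
    by_contra hy
    have hsum : ∑ i, y i = 0 := by simp [y, c, Finset.sum_sub_distrib, ← Finset.mul_sum]
    have hquad : y ⬝ᵥ e *ᵥ y = 0 := by
      rw [show y = v + (-c) • Pi.single b 1 by simp [y, sub_eq_add_neg],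
        he.add_dotProduct_mulVec_add, hev]
      simp [mulVec_neg, mulVec_smul, hdiag]
    exact (h y hy hsum).ne hquad
  have hc : c ≠ 0 := by
    rintro hc
    exact hv0 (by simpa [y, hc, sub_eq_zero] using hy)
  have : (e *ᵥ v) a = c * e a b := by
    rw [sub_eq_zero.1 hy, mulVec_smul, mulVec_single_one]; rfl
  rw [hev] at this
  exact mul_ne_zero hc hab this.symm

theorem pos_of_isMaxOn (h : IsStrictNegType e) (he : e.IsSymm) (hdet : IsUnit e.det)
    [Nonempty ι] (hw : ∀ i, 0 < (e⁻¹ *ᵥ 1) i) {q : ι → ℝ} (hq : q ∈ stdSimplex ℝ ι)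
    (hmax : IsMaxOn (fun x => x ⬝ᵥ e *ᵥ x) (stdSimplex ℝ ι) q) (i : ι) : 0 < q i := by
  set s := ∑ k, (e⁻¹ *ᵥ 1) k
  have hs : 0 < s := Finset.sum_pos (fun k _ => hw k) Finset.univ_nonempty
  set q' := s⁻¹ • e⁻¹ *ᵥ 1
  have hq' : q' ∈ stdSimplex ℝ ι :=
    ⟨fun k => (mul_pos (inv_pos.2 hs) (hw k)).le, by simp [q', ← Finset.mul_sum, s, hs.ne']⟩
  suffices q = q' from this ▸ mul_pos (inv_pos.2 hs) (hw i)
  by_contra hne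
  have hv : q - q' ≠ 0 := sub_ne_zero.2 hne
  have hsum : ∑ k, (q - q') k = 0 := by simp [Finset.sum_sub_distrib, hq.2, hq'.2]
  have hcross : (q - q') ⬝ᵥ e *ᵥ q' = 0 := by
    rw [mulVec_smul, mulVec_nonsing_inv_mulVec hdet, dotProduct_smul, dotProduct_one, hsum,
      smul_zero]
  have hexp := he.add_dotProduct_mulVec_add q' (q - q')
  rw [add_sub_cancel, hcross] at hexp
  linarith [h _ hv hsum, isMaxOn_iff.1 hmax q' hq']

theorem forall_isMaxOn_ne_zero_iff [Nonempty ι] (h : IsStrictNegType e) (he : e.IsSymm)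
    (hdiag : ∀ i, e i i = 0) (hdet : IsUnit e.det) :
    (∀ q ∈ stdSimplex ℝ ι, IsMaxOn (fun x => x ⬝ᵥ e *ᵥ x) (stdSimplex ℝ ι) q → ∀ i, q i ≠ 0) ↔
      ∀ i, 0 < (e⁻¹ *ᵥ 1) i := by
  refine ⟨fun hfull => ?_, fun hw q hq hmax i => (h.pos_of_isMaxOn he hdet hw hq hmax i).ne'⟩
  obtain ⟨q, hq, hmax⟩ := (isCompact_stdSimplex ℝ ι).exists_isMaxOn
    ⟨_, single_mem_stdSimplex ℝ (Classical.arbitrary ι)⟩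
    (by fun_prop : Continuous fun x : ι → ℝ => x ⬝ᵥ e *ᵥ x).continuousOn
  exact inv_mulVec_one_pos_of_isMaxOn he hdiag hdet hq hmax
    fun i => (hq.1 i).lt_of_ne' (hfull q hq hmax i)

end IsStrictNegType

end Quadratic

section Restriction

variable {ι : Type*} {S : Finset ι}

theorem extend_val_restrict {p : ι → ℝ} (hp : ∀ i ∉ S, p i = 0) :
    Subtype.val.extend (fun k : S => p k) 0 = p := by
  funext i
  by_cases hi : i ∈ S
  · exact Subtype.val_injective.extend_apply _ _ ⟨i, hi⟩
  · rw [Function.extend_apply' _ _ _ fun ⟨k, hk⟩ => hi (hk ▸ k.2), hp i hi, Pi.zero_apply]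

variable [Fintype ι]

theorem sum_mul_extend_val (x : S → ℝ) (f : ι → ℝ) :
    ∑ i, f i * Subtype.val.extend x 0 i = ∑ k : S, f k * x k := by
  rw [← Finset.sum_subset (Finset.subset_univ S), ← Finset.sum_coe_sort]
  · exact Finset.sum_congr rfl fun k _ => by rw [Subtype.val_injective.extend_apply]
  · intro i _ hi
    rw [Function.extend_apply' _ _ _ fun ⟨k, hk⟩ => hi (hk ▸ k.2), Pi.zero_apply, mul_zero]

theorem sum_extend_val (x : S → ℝ) : ∑ i, Subtype.val.extend x 0 i = ∑ k, x k := by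
  simpa using sum_mul_extend_val x 1

theorem extend_val_dotProduct_mulVec (e : Matrix ι ι ℝ) (x : S → ℝ) :
    Subtype.val.extend x 0 ⬝ᵥ e *ᵥ Subtype.val.extend x 0 =
      x ⬝ᵥ e.submatrix (↑) (↑) *ᵥ x := by
  rw [dotProduct_comm]
  simp only [dotProduct, mulVec, sum_mul_extend_val, submatrix_apply]
  exact Finset.sum_congr rfl fun k _ => mul_comm _ _

theorem extend_val_mem_stdSimplex {x : S → ℝ} (hx : x ∈ stdSimplex ℝ S) :
    Subtype.val.extend x 0 ∈ stdSimplex ℝ ι := by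
  refine ⟨fun i => ?_, by rw [sum_extend_val, hx.2]⟩
  by_cases hi : i ∈ S
  · rw [Subtype.val_injective.extend_apply _ _ ⟨i, hi⟩]; exact hx.1 _
  · rw [Function.extend_apply' _ _ _ fun ⟨k, hk⟩ => hi (hk ▸ k.2)]; rfl

theorem restrict_mem_stdSimplex {p : ι → ℝ} (hp : p ∈ stdSimplex ℝ ι) (hS : ∀ i ∉ S, p i = 0) :
    (fun k : S => p k) ∈ stdSimplex ℝ S :=
  ⟨fun k => hp.1 k, by rw [← sum_extend_val, extend_val_restrict hS, hp.2]⟩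

variable {e : Matrix ι ι ℝ}

theorem IsStrictNegType.submatrix_val (h : IsStrictNegType e) (S : Finset ι) :
    IsStrictNegType (e.submatrix ((↑) : S → ι) (↑)) := fun x hx hsum => by
  have hne : Subtype.val.extend x 0 ≠ 0 := fun h0 =>
    hx (funext fun k => by simpa [Subtype.val_injective.extend_apply] using congrFun h0 k)
  simpa [extend_val_dotProduct_mulVec] using h _ hne (by rw [sum_extend_val, hsum])

theorem isMaxOn_restrict {p : ι → ℝ}
    (hmax : IsMaxOn (fun x => x ⬝ᵥ e *ᵥ x) (stdSimplex ℝ ι) p) (hS : ∀ i ∉ S, p i = 0) :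
    IsMaxOn (fun x => x ⬝ᵥ e.submatrix (↑) (↑) *ᵥ x) (stdSimplex ℝ S) (fun k : S => p k) :=
  isMaxOn_iff.2 fun r hr => by
    simpa only [← extend_val_dotProduct_mulVec, extend_val_restrict hS]
      using isMaxOn_iff.1 hmax _ (extend_val_mem_stdSimplex hr)

variable [DecidableEq ι]

theorem IsStrictNegType.isUnit_det_submatrix (h : IsStrictNegType e) (he : e.IsSymm)
    (hdiag : ∀ i, e i i = 0) {a b : ι} (ha : a ∈ S) (hb : b ∈ S) (hab : e a b ≠ 0) :
    IsUnit (e.submatrix ((↑) : S → ι) (↑)).det :=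
  (h.submatrix_val S).isUnit_det (he.submatrix _) (fun k => hdiag k) (a := ⟨a, ha⟩) (b := ⟨b, hb⟩)
    hab

theorem inv_mulVec_one_submatrix_pos_of_isMaxOn (he : e.IsSymm) (hdiag : ∀ i, e i i = 0)
    {p : ι → ℝ} (hp : p ∈ stdSimplex ℝ ι)
    (hmax : IsMaxOn (fun x => x ⬝ᵥ e *ᵥ x) (stdSimplex ℝ ι) p) (hS : ∀ i, i ∈ S ↔ p i ≠ 0)
    (hdet : IsUnit (e.submatrix ((↑) : S → ι) (↑)).det) (k : S) :
    0 < ((e.submatrix ((↑) : S → ι) ((↑) : S → ι))⁻¹ *ᵥ 1) k := by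
  have hp0 (i : ι) (hi : i ∉ S) : p i = 0 := not_not.1 (mt (hS i).2 hi)
  exact inv_mulVec_one_pos_of_isMaxOn (he.submatrix _) (fun k : S => hdiag k) hdet
    (restrict_mem_stdSimplex hp hp0) (isMaxOn_restrict hmax hp0)
    (fun k => (hp.1 k).lt_of_ne' ((hS k).1 k.2)) k

end Restriction

section SchurComplement

variable {ι : Type*} [DecidableEq ι] {S : Finset ι} {e : Matrix ι ι ℝ}

theorem submatrix_erase_mulVec_eq_one {j : ι} (hj : j ∈ S) {w : S → ℝ}
    {Δ : S.erase j → ℝ} (hw : e.submatrix ((↑) : S → ι) (↑) *ᵥ w = 1)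
    (hΔ : e.submatrix ((↑) : S.erase j → ι) (↑) *ᵥ Δ = fun i : S.erase j => e i j) :
    e.submatrix ((↑) : S.erase j → ι) (↑) *ᵥ
      ((fun i : S.erase j => w ⟨i, Finset.mem_of_mem_erase i.2⟩) + w ⟨j, hj⟩ • Δ) = 1 := by
  funext i
  set W := Subtype.val.extend w 0
  have hW (k : ι) (hk : k ∈ S) : W k = w ⟨k, hk⟩ := Subtype.val_injective.extend_apply _ _ ⟨k, hk⟩
  have hrow : ∑ k : S, e i k * w k =
      ∑ k : S.erase j, e i k * w ⟨k, Finset.mem_of_mem_erase k.2⟩ + e i j * w ⟨j, hj⟩ := by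
    calc ∑ k : S, e i k * w k = ∑ k ∈ S, e i k * W k := by
          rw [← Finset.sum_coe_sort S]; exact Finset.sum_congr rfl fun k _ => by rw [hW k k.2]
      _ = ∑ k ∈ S.erase j, e i k * W k + e i j * W j := (Finset.sum_erase_add _ _ hj).symm
      _ = _ := by
          rw [← Finset.sum_coe_sort (S.erase j), hW j hj]
          congr 1
          exact Finset.sum_congr rfl fun k _ => by rw [hW k (Finset.mem_of_mem_erase k.2)]
  have h1 := congrFun hw ⟨i, Finset.mem_of_mem_erase i.2⟩
  have h2 := congrFun hΔ i
  simp only [mulVec, dotProduct, submatrix_apply, Pi.one_apply] at h1 h2 ⊢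
  rw [hrow] at h1
  simp only [Pi.add_apply, Pi.smul_apply, smul_eq_mul, mul_add, Finset.sum_add_distrib,
    mul_left_comm _ (w ⟨j, hj⟩), ← Finset.mul_sum, h2]
  linarith

end SchurComplement

/-- With `J = peel(d)`, `I = J \ {j₀}`, `δ` the distances from `I` to `j₀`,
`Δ = d|_I⁻¹ δ`, and `w⁰ = d|_J⁻¹ 1`: `peel(d|_I) = I` if and only if
`w⁰|_I + w⁰_{j₀} Δ > 0` componentwise. -/
theorem stmt12 {N : ℕ} (d : Matrix (Fin N) (Fin N) ℝ)
    (hsymm : d.IsSymm) (hdiag : ∀ i, d i i = 0)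
    (hpos : ∀ i j, i ≠ j → 0 < d i j)
    (hSNT : ∀ x : Fin N → ℝ, x ≠ 0 → ∑ i, x i = 0 → x ⬝ᵥ d.mulVec x < 0)
    (p : Fin N → ℝ) (hp : p ∈ stdSimplex ℝ (Fin N))
    (hmax : ∀ q ∈ stdSimplex ℝ (Fin N), q ⬝ᵥ d.mulVec q ≤ p ⬝ᵥ d.mulVec p)
    (J : Finset (Fin N)) (hJ : ∀ i, i ∈ J ↔ p i ≠ 0)
    (j₀ : Fin N) (hj₀ : j₀ ∈ J)
    (I : Finset (Fin N)) (hI : I = J.erase j₀)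
    (dJ : Matrix {i // i ∈ J} {i // i ∈ J} ℝ)
    (hdJ : dJ = d.submatrix Subtype.val Subtype.val)
    (dI : Matrix {i // i ∈ I} {i // i ∈ I} ℝ)
    (hdI : dI = d.submatrix Subtype.val Subtype.val)
    (δ : {i // i ∈ I} → ℝ) (hδ : ∀ i, δ i = d i.1 j₀)
    (Δ : {i // i ∈ I} → ℝ) (hΔ : Δ = dI⁻¹.mulVec δ)
    (w₀ : {i // i ∈ J} → ℝ) (hw₀ : w₀ = dJ⁻¹.mulVec 1) :
    ((∀ q ∈ stdSimplex ℝ {i // i ∈ I},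
        (∀ r ∈ stdSimplex ℝ {i // i ∈ I}, r ⬝ᵥ dI.mulVec r ≤ q ⬝ᵥ dI.mulVec q) →
        ∀ i, q i ≠ 0) ↔
      (∀ i : {x // x ∈ I},
        0 < w₀ ⟨i.1, Finset.mem_of_mem_erase (by exact hI ▸ i.2 : i.1 ∈ J.erase j₀)⟩
            + w₀ ⟨j₀, hj₀⟩ * Δ i)) := by
  subst hI
  obtain rfl : δ = fun i : J.erase j₀ => d i j₀ := funext hδ
  have hd : IsStrictNegType d := hSNT
  rcases (J.erase j₀).eq_empty_or_nonempty with hI | ⟨i₁, hi₁⟩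
  · have : IsEmpty (J.erase j₀) := ⟨fun i => by simpa [hI] using i.2⟩
    exact iff_of_true (fun _ _ _ => isEmptyElim) isEmptyElim
  have hJdet : IsUnit dJ.det := hdJ ▸ hd.isUnit_det_submatrix hsymm hdiag
    (Finset.mem_of_mem_erase hi₁) hj₀ (hpos _ _ (Finset.ne_of_mem_erase hi₁)).ne'
  have hw₀pos : ∀ k, 0 < w₀ k := by
    subst hw₀ hdJ
    exact inv_mulVec_one_submatrix_pos_of_isMaxOn hsymm hdiag hp (isMaxOn_iff.2 hmax) hJ hJdet
  rcases subsingleton_or_nontrivial (J.erase j₀) with hsub | ⟨a, b, hab⟩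
  · have hdI0 : dI = 0 := by ext a b; rw [Subsingleton.elim a b, hdI]; exact hdiag _
    exact iff_of_true (fun q hq _ => ne_zero_of_mem_stdSimplex_of_subsingleton hq)
      fun i => by simpa [hΔ, hdI0] using hw₀pos _
  have hIdet : IsUnit dI.det := hdI ▸ hd.isUnit_det_submatrix hsymm hdiag a.2 b.2
    (hpos _ _ (Subtype.coe_ne_coe.2 hab)).ne'
  have hinv : dI⁻¹ *ᵥ 1 = (fun i : J.erase j₀ => w₀ ⟨i, Finset.mem_of_mem_erase i.2⟩) +
      w₀ ⟨j₀, hj₀⟩ • Δ := by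
    refine nonsing_inv_mulVec_eq_of_mulVec_eq hIdet ?_
    have hdJw₀ : dJ *ᵥ w₀ = 1 := by rw [hw₀, mulVec_nonsing_inv_mulVec hJdet]
    have hdIΔ : dI *ᵥ Δ = fun i : J.erase j₀ => d i j₀ := by
      rw [hΔ, mulVec_nonsing_inv_mulVec hIdet]
    subst hdI hdJ
    exact submatrix_erase_mulVec_eq_one hj₀ hdJw₀ hdIΔ
  have : Nonempty (J.erase j₀) := ⟨a⟩
  have key := (hdI ▸ hd.submatrix_val _ : IsStrictNegType dI).forall_isMaxOn_ne_zero_iff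
    (hdI ▸ hsymm.submatrix _) (by simp [hdI, hdiag]) hIdet
  rwa [hinv] at key
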